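/- In AF2, if Γ ⊢ t : A where A is an atomic formula, then the λ-term t does not begin with a λ-abstraction. -/

import Mathlib

/- Untyped λ-calculus with de Bruijn indices, head reduction, Church numerals. -/

inductive Lam : Type
  | var : ℕ → Lam
  | app : Lam → Lam → Lam
  | lam : Lam → Lam
deriving DecidableEq, Repr

namespace Lam

/-- Shift free variables `≥ c` up by 1. -/
def lift (c : ℕ) : Lam → Lam
  | var n => if n < c then var n else var (n + 1)
  | app s t => app (s.lift c) (t.lift c)
  | lam t => lam (t.lift (c + 1))

/-- Push a substitution under a binder. -/
def up (σ : ℕ → Lam) : ℕ → Lam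
  | 0 => var 0
  | n + 1 => (σ n).lift 0

/-- Capture-avoiding simultaneous substitution. -/
def subst (σ : ℕ → Lam) : Lam → Lam
  | var n => σ n
  | app s t => app (s.subst σ) (t.subst σ)
  | lam t => lam (t.subst (up σ))

/-- `t.subst0 u` is `t[u/0]`, the β-contractum substitution. -/
def subst0 (t u : Lam) : Lam :=
  t.subst (fun n => match n with | 0 => u | n + 1 => var n)

/-- `m` occurs free in the term. -/
def FreeIn (m : ℕ) : Lam → Prop
  | var n => n = m
  | app s t => s.FreeIn m ∨ t.FreeIn m
  | lam t => t.FreeIn (m + 1)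

/-- A closed λ-term. -/
def Closed (t : Lam) : Prop := ∀ m, ¬ t.FreeIn m

end Lam

/-- One-step β-reduction (anywhere in the term). -/
inductive Beta : Lam → Lam → Prop
  | beta (t u) : Beta (.app (.lam t) u) (t.subst0 u)
  | appL {s s'} (t) : Beta s s' → Beta (.app s t) (.app s' t)
  | appR {t t'} (s) : Beta t t' → Beta (.app s t) (.app s t')
  | lam {t t'} : Beta t t' → Beta (.lam t) (.lam t')

/-- β-equivalence `≃β`. -/
def BetaEq : Lam → Lam → Prop := Relation.EqvGen Beta

/-- A term in (β-)normal form. -/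
def NormalForm (t : Lam) : Prop := ∀ u, ¬ Beta t u

/-- One step of head reduction: reduce the head redex. -/
inductive HStep : Lam → Lam → Prop
  | beta (t u) : HStep (.app (.lam t) u) (t.subst0 u)
  | lam {t t'} : HStep t t' → HStep (.lam t) (.lam t')
  | app {t t'} (u) : HStep t t' → (∀ s, t ≠ .lam s) → HStep (.app t u) (.app t' u)

/-- `HRedN k u v` : `u ≻ v` by a head reduction of length `h(u,v) = k`. -/
inductive HRedN : ℕ → Lam → Lam → Prop
  | refl (t) : HRedN 0 t t
  | step {k t u v} : HStep t u → HRedN k u v → HRedN (k + 1) t v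

/-- `u ≻ v` : `v` is obtained from `u` by head reduction. -/
def HRed (t u : Lam) : Prop := ∃ k, HRedN k t u

/-- Head normal form: no head redex. -/
def HeadNormal (t : Lam) : Prop := ∀ u, ¬ HStep t u

/-- Solvable: the head reduction terminates. -/
def Solvable (t : Lam) : Prop := ∃ v, HRed t v ∧ HeadNormal v

/-- `(t)u₁…uₙ` : iterated application. -/
def appList : Lam → List Lam → Lam
  | t, [] => t
  | t, u :: us => appList (t.app u) us

/-- `(f)ⁿ x` with `x = var 1`, `f = var 0`. -/
def churchBody : ℕ → Lam
  | 0 => .var 1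
  | n + 1 => .app (.var 0) (churchBody n)

/-- Church numeral `n̲ = λx λf (f)ⁿ x`. -/
def church (n : ℕ) : Lam := .lam (.lam (churchBody n))

/-- `0̲ = λx λf x`. -/
def czero : Lam := .lam (.lam (.var 1))

/-- `s̲ = λn λx λf (f)((n)x)f`. -/
def csucc : Lam := .lam (.lam (.lam (.app (.var 0) (.app (.app (.var 2) (.var 1)) (.var 0)))))

/-- `(s̲)ⁿ 0̲`. -/
def succIter : ℕ → Lam
  | 0 => czero
  | n + 1 => .app csucc (succIter n)

/-- `G = λx λy (x) λz (y)(s̲)z`. -/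
def Gop : Lam := .lam (.lam (.app (.var 1) (.lam (.app (.var 1) (.app csucc (.var 0))))))

/-- `δ = λf (f)0̲`. -/
def deltaOp : Lam := .lam (.app (.var 0) czero)

/-- `T₁ = λn ((n)δ)G`. -/
def T1 : Lam := .lam (.app (.app (.var 0) deltaOp) Gop)

/-- `F = λx λy (x)(s̲)y`. -/
def Fop : Lam := .lam (.lam (.app (.var 1) (.app csucc (.var 0))))

/-- `T₂ = λn λf (((n)f)F)0̲`. -/
def T2 : Lam := .lam (.lam (.app (.app (.app (.var 1) (.var 0)) Fop) czero))

/-- `θ₀ = λx λf λz (x)(λd z)(λx x)`. -/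
def theta0 : Lam := .lam (.lam (.lam (.app (.app (.var 2) (.lam (.var 1))) (.lam (.var 0)))))

/-- `T` is a storage operator for the integers (the fixed variable `f` is `var 0`). -/
def IsStorage (T : Lam) : Prop :=
  ∀ n : ℕ, ∃ τ : Lam, BetaEq τ (church n) ∧
    ∀ θ : Lam, BetaEq θ (church n) →
      ∃ σ : ℕ → Lam, HRed (.app (.app T θ) (.var 0)) (.app (.var 0) (τ.subst σ))

/- AF2 : second-order functional arithmetic over the language {0, s}.
   First-order variables are de Bruijn indices; predicate variables are named
   by a `Bool` (true = ⊥-variable of AF2⊥) and a number, each with an arity. -/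

inductive Tm : Type
  | var : ℕ → Tm
  | zero : Tm
  | succ : Tm → Tm
deriving DecidableEq

namespace Tm

def liftBy (c m : ℕ) : Tm → Tm
  | var n => if n < c then var n else var (n + m)
  | zero => zero
  | succ t => succ (t.liftBy c m)

def up (σ : ℕ → Tm) : ℕ → Tm
  | 0 => var 0
  | n + 1 => (σ n).liftBy 0 1

def subst (σ : ℕ → Tm) : Tm → Tm
  | var n => σ n
  | zero => zero
  | succ t => succ (t.subst σ)

end Tm

/-- The first-order term `sⁿ(0)`. -/
def snum : ℕ → Tm
  | 0 => .zero
  | n + 1 => .succ (snum n)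

/-- Second-order formulas.  `pvar b X args` is the atomic formula `X(args)`,
`b = true` marking the special ⊥-variables of AF2⊥; `all1` binds a first-order
de Bruijn variable; `all2 b X k A` is `∀X A` for the `k`-ary predicate variable `(b,X)`. -/
inductive Fml : Type
  | pvar (b : Bool) (X : ℕ) (args : List Tm)
  | arr (A B : Fml)
  | all1 (A : Fml)
  | all2 (b : Bool) (X : ℕ) (k : ℕ) (A : Fml)
deriving DecidableEq

/-- Absurdity `⊥ := ∀X X` (for a 0-ary predicate variable `X`). -/
def botF : Fml := .all2 false 0 0 (.pvar false 0 [])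

/-- `¬A := A → ⊥`. -/
def negF (A : Fml) : Fml := A.arr botF

namespace Fml

/-- Shift first-order variables `≥ c` by `m`. -/
def lift1By (c m : ℕ) : Fml → Fml
  | pvar b X args => pvar b X (args.map (Tm.liftBy c m))
  | arr A B => arr (A.lift1By c m) (B.lift1By c m)
  | all1 A => all1 (A.lift1By (c + 1) m)
  | all2 b X k A => all2 b X k (A.lift1By c m)

/-- First-order substitution in a formula. -/
def subst1 (σ : ℕ → Tm) : Fml → Fml
  | pvar b X args => pvar b X (args.map (Tm.subst σ))
  | arr A B => arr (A.subst1 σ) (B.subst1 σ)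
  | all1 A => all1 (A.subst1 (Tm.up σ))
  | all2 b X k A => all2 b X k (A.subst1 σ)

/-- `A[u/x]` for the first-order variable `0`. -/
def substTop (u : Tm) (A : Fml) : Fml :=
  A.subst1 (fun n => match n with | 0 => u | n + 1 => Tm.var n)

/-- The predicate variable `(b, X)` occurs free. -/
def fv2 (b : Bool) (X : ℕ) : Fml → Prop
  | pvar b' X' _ => b = b' ∧ X = X'
  | arr A B => A.fv2 b X ∨ B.fv2 b X
  | all1 A => A.fv2 b X
  | all2 b' X' _ A => ¬(b = b' ∧ X = X') ∧ A.fv2 b X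

/-- Instantiate the `k` argument slots (first-order variables `0,…,k-1`) of `G` by `args`. -/
def instArgs (k : ℕ) (G : Fml) (args : List Tm) : Fml :=
  G.subst1 (fun n => if n < k then args.getD n Tm.zero else Tm.var (n - k))

/-- `A[G/X]` : substitution of the formula `G` (with argument slots `0,…,k-1`)
for the `k`-ary predicate variable `(b, X)`; `d` is the number of first-order
binders already crossed. -/
def psubst (b : Bool) (X : ℕ) (k : ℕ) (G : Fml) : ℕ → Fml → Fml
  | d, pvar b' X' args =>
      if b = b' ∧ X = X' then instArgs k (G.lift1By k d) args else pvar b' X' args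
  | d, arr A B => arr (psubst b X k G d A) (psubst b X k G d B)
  | d, all1 A => all1 (psubst b X k G (d + 1) A)
  | d, all2 b' X' m A =>
      if b = b' ∧ X = X' then all2 b' X' m A else all2 b' X' m (psubst b X k G d A)

end Fml

/-- ⊥-types : formulas ending with `⊥` or with an atom `X_⊥(t̄)`. -/
inductive IsBotFml : Fml → Prop
  | bot : IsBotFml botF
  | pvar (X args) : IsBotFml (.pvar true X args)
  | arr (A) {B} : IsBotFml B → IsBotFml (.arr A B)
  | all1 {A} : IsBotFml A → IsBotFml (.all1 A)
  | all2 (b X k) {A} : IsBotFml A → IsBotFml (.all2 b X k A)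

/-- Equational consequence of a set `E` of equations. -/
inductive EqCns (E : Set (Tm × Tm)) : Tm → Tm → Prop
  | ax {u v : Tm} (σ : ℕ → Tm) : (u, v) ∈ E → EqCns E (u.subst σ) (v.subst σ)
  | refl (t) : EqCns E t t
  | symm {u v} : EqCns E u v → EqCns E v u
  | trans {u v w} : EqCns E u v → EqCns E v w → EqCns E u w
  | succ {u v} : EqCns E u v → EqCns E u.succ v.succ

/-- `E` is adequate with the type of integers. -/
def Adequate (E : Set (Tm × Tm)) : Prop :=
  (∀ a, ¬ EqCns E (Tm.succ a) Tm.zero) ∧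
  (∀ a b, EqCns E (Tm.succ a) (Tm.succ b) → EqCns E a b)

/-- The AF2 type system (Curry style, de Bruijn contexts, equational rule for `E`). -/
inductive DerA (E : Set (Tm × Tm)) : List Fml → Lam → Fml → Prop
  | var (Γ n A) : Γ[n]? = some A → DerA E Γ (.var n) A
  | lamI {Γ A t B} : DerA E (A :: Γ) t B → DerA E Γ (.lam t) (.arr A B)
  | appE {Γ u v A B} : DerA E Γ u (.arr A B) → DerA E Γ v A → DerA E Γ (.app u v) B
  | all1I {Γ t A} : DerA E (Γ.map (Fml.lift1By 0 1)) t A → DerA E Γ t (.all1 A)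
  | all1E {Γ t A} (u) : DerA E Γ t (.all1 A) → DerA E Γ t (A.substTop u)
  | all2I {Γ t A} (b X k) : DerA E Γ t A → (∀ B ∈ Γ, ¬ B.fv2 b X) →
      DerA E Γ t (.all2 b X k A)
  | all2E {Γ t b X k A} (G) : DerA E Γ t (.all2 b X k A) →
      DerA E Γ t (Fml.psubst b X k G 0 A)
  | eqr {Γ : List Fml} {t : Lam} {A : Fml} {u v : Tm} : DerA E Γ t (A.substTop u) → EqCns E u v →
      DerA E Γ t (A.substTop v)

/-- The AF2⊥ type system: as AF2, but a ⊥-variable may only be instantiated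
by a ⊥-type. -/
inductive DerB (E : Set (Tm × Tm)) : List Fml → Lam → Fml → Prop
  | var (Γ n A) : Γ[n]? = some A → DerB E Γ (.var n) A
  | lamI {Γ A t B} : DerB E (A :: Γ) t B → DerB E Γ (.lam t) (.arr A B)
  | appE {Γ u v A B} : DerB E Γ u (.arr A B) → DerB E Γ v A → DerB E Γ (.app u v) B
  | all1I {Γ t A} : DerB E (Γ.map (Fml.lift1By 0 1)) t A → DerB E Γ t (.all1 A)
  | all1E {Γ t A} (u) : DerB E Γ t (.all1 A) → DerB E Γ t (A.substTop u)
  | all2I {Γ t A} (b X k) : DerB E Γ t A → (∀ B ∈ Γ, ¬ B.fv2 b X) →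
      DerB E Γ t (.all2 b X k A)
  | all2E {Γ t b X k A} (G) : DerB E Γ t (.all2 b X k A) →
      (b = true → IsBotFml G) → DerB E Γ t (Fml.psubst b X k G 0 A)
  | eqr {Γ : List Fml} {t : Lam} {A : Fml} {u v : Tm} : DerB E Γ t (A.substTop u) → EqCns E u v →
      DerB E Γ t (A.substTop v)

/-- `N[t] = ∀X{X(0), ∀y(X(y)→X(sy)) → X(t)}`, with `b` choosing the kind of
the quantified (unary) predicate variable. -/
def NtyGen (b : Bool) (t : Tm) : Fml :=
  .all2 b 0 1 (.arr (.pvar b 0 [Tm.zero])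
    (.arr (.all1 (.arr (.pvar b 0 [Tm.var 0]) (.pvar b 0 [Tm.succ (Tm.var 0)])))
      (.pvar b 0 [t])))

/-- The type `N[t]` of integers. -/
def Nty (t : Tm) : Fml := NtyGen false t

/-- `N^⊥[t]`, quantifying over a ⊥-variable. -/
def Nbot (t : Tm) : Fml := NtyGen true t

/-- The simple Gödel translation `N*[t] = ∀X{¬X(0), ∀y(¬X(y)→¬X(sy)) → ¬X(t)}`. -/
def Nstar (t : Tm) : Fml :=
  .all2 false 0 1 (.arr (negF (.pvar false 0 [Tm.zero]))
    (.arr (.all1 (.arr (negF (.pvar false 0 [Tm.var 0]))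
        (negF (.pvar false 0 [Tm.succ (Tm.var 0)]))))
      (negF (.pvar false 0 [t]))))

/-- `∀x{N*[x] → ¬¬N[x]}`. -/
def specStar : Fml := .all1 ((Nstar (Tm.var 0)).arr (negF (negF (Nty (Tm.var 0)))))

/-- `∀x{N^⊥[x] → ¬¬N[x]}`. -/
def specBot : Fml := .all1 ((Nbot (Tm.var 0)).arr (negF (negF (Nty (Tm.var 0)))))

/-! A λ-abstraction is typed by `→`-introduction, and every typing rule that keeps the term
unchanged (the quantifier rules and the equational rule) only adds or removes quantifiers in
front of the type, or substitutes into it; neither can turn `∀…∀(B → C)` into an atom. So a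
λ-abstraction only has types of that shape, and neither an atom nor `⊥ = ∀X X` is one. -/

namespace Fml

inductive ArrowLike : Fml → Prop
  | arr (A B) : ArrowLike (.arr A B)
  | all1 {A} : ArrowLike A → ArrowLike (.all1 A)
  | all2 (b X k) {A} : ArrowLike A → ArrowLike (.all2 b X k A)

@[simp]
theorem arrowLike_arr (A B : Fml) : (arr A B).ArrowLike := .arr A B

@[simp]
theorem not_arrowLike_pvar (b : Bool) (X : ℕ) (args : List Tm) : ¬ (pvar b X args).ArrowLike :=
  nofun

@[simp]
theorem arrowLike_all1_iff {A : Fml} : (all1 A).ArrowLike ↔ A.ArrowLike :=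
  ⟨fun | .all1 h => h, .all1⟩

@[simp]
theorem arrowLike_all2_iff {b : Bool} {X k : ℕ} {A : Fml} :
    (all2 b X k A).ArrowLike ↔ A.ArrowLike :=
  ⟨fun | .all2 _ _ _ h => h, .all2 b X k⟩

theorem not_arrowLike_botF : ¬ botF.ArrowLike := by
  simp [botF]

@[simp]
theorem arrowLike_subst1_iff (σ : ℕ → Tm) (A : Fml) :
    (A.subst1 σ).ArrowLike ↔ A.ArrowLike := by
  induction A generalizing σ <;> simp [subst1, *]

theorem ArrowLike.psubst {A : Fml} (h : A.ArrowLike) (b : Bool) (X k : ℕ) (G : Fml) (d : ℕ) :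
    (psubst b X k G d A).ArrowLike := by
  induction h generalizing d with
  | arr => exact .arr _ _
  | all1 _ ih => exact .all1 (ih _)
  | all2 _ _ _ h ih =>
    simp only [Fml.psubst]
    split
    · exact .all2 _ _ _ h
    · exact .all2 _ _ _ (ih d)

end Fml

theorem DerA.arrowLike_of_lam {E : Set (Tm × Tm)} {Γ : List Fml} {s : Lam} {A : Fml}
    (h : DerA E Γ (.lam s) A) : A.ArrowLike := by
  generalize ht : Lam.lam s = t at h
  induction h with
  | var | appE => cases ht
  | lamI => exact .arr _ _
  | all1I _ ih => exact .all1 (ih ht)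
  | all1E _ _ ih => simpa [Fml.substTop] using ih ht
  | all2I _ _ _ _ _ ih => exact .all2 _ _ _ (ih ht)
  | all2E G _ ih => exact (Fml.arrowLike_all2_iff.1 (ih ht)).psubst _ _ _ G 0
  | eqr _ _ ih => simpa [Fml.substTop] using ih ht

/-- In AF2, a term of an atomic type does not begin with a λ-abstraction. -/
theorem atomic_type_no_lambda (E : Set (Tm × Tm)) (Γ : List Fml) (t : Lam) (A : Fml)
    (hA : A = botF ∨ ∃ b X args, A = Fml.pvar b X args) (h : DerA E Γ t A) :
    ∀ s : Lam, t ≠ .lam s := by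
  rintro s rfl
  rcases hA with rfl | ⟨b, X, args, rfl⟩
  · exact Fml.not_arrowLike_botF h.arrowLike_of_lam
  · exact Fml.not_arrowLike_pvar b X args h.arrowLike_of_lam
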